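/- arXiv:2111.02483 — 8 statements merged into one kernel-verified Lean document; each statement's English description precedes it below -/
import Mathlib

section
/- Let G be a graph and let q₁, q₂ be cliques (maximal complete subgraphs) of G such that every edge {x,y} with both endpoints in q₁ ∪ q₂ has at least one endpoint in q₁ ∩ q₂. Then every complete subgraph c with c ⊆ q₁ ∪ q₂ satisfies c ⊆ q₁ or c ⊆ q₂. -/
universe u

variable {V : Type u}

/-- A clique of `G` in the sense of the paper: a maximal complete subgraph,
represented as a finset of vertices. -/
def MaxClique (G : SimpleGraph V) (s : Finset V) : Prop :=
  G.IsClique (s : Set V) ∧ ∀ t : Finset V, G.IsClique (t : Set V) → s ⊆ t → s = t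

/-- A pairwise-intersecting family of finsets. -/
def PairwiseIntersecting (Q : Set (Finset V)) : Prop :=
  ∀ q ∈ Q, ∀ r ∈ Q, ∃ v, v ∈ q ∧ v ∈ r

/-- A clique of the clique graph `K(G)`: a maximal pairwise-intersecting family of
cliques of `G`. -/
def IsCliqueOfCliques (G : SimpleGraph V) (Q : Set (Finset V)) : Prop :=
  (∀ q ∈ Q, MaxClique G q) ∧ PairwiseIntersecting Q ∧
    ∀ Q' : Set (Finset V), Q ⊆ Q' → (∀ q ∈ Q', MaxClique G q) →
      PairwiseIntersecting Q' → Q' = Q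

/-- A necktie: a clique of `K(G)` with empty total intersection. -/
def IsNecktie (G : SimpleGraph V) (Q : Set (Finset V)) : Prop :=
  IsCliqueOfCliques G Q ∧ ¬ ∃ v, ∀ q ∈ Q, v ∈ q

/-- The star of a vertex: the family of cliques of `G` containing it. -/
def starOf (G : SimpleGraph V) (x : V) : Set (Finset V) :=
  {q | MaxClique G q ∧ x ∈ q}

/-- A vertex is normal when its star is a clique of `K(G)`. -/
def IsNormal (G : SimpleGraph V) (x : V) : Prop :=
  IsCliqueOfCliques G (starOf G x)

/-- A triangle: a complete subgraph with three vertices. -/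
def IsTriangle (G : SimpleGraph V) (T : Finset V) : Prop :=
  G.IsClique (T : Set V) ∧ T.card = 3

/-- An inner triangle: a triangle that is a clique and such that each of its edges
lies in a triangle different from `T`. -/
def IsInnerTriangle [DecidableEq V] (G : SimpleGraph V) (T : Finset V) : Prop :=
  MaxClique G T ∧ T.card = 3 ∧
    ∀ x ∈ T, ∀ y ∈ T, x ≠ y →
      ∃ T' : Finset V, IsTriangle G T' ∧ T' ≠ T ∧ T ∩ T' = ({x, y} : Finset V)

/-- `Q_T`: the family of cliques meeting the triangle `T` in at least two vertices. -/
def QT [DecidableEq V] (G : SimpleGraph V) (T : Finset V) : Set (Finset V) :=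
  {q | MaxClique G q ∧ 2 ≤ (q ∩ T).card}

/-- Adjacency between two vertices of `K²(G)` (i.e. cliques of `K(G)`):
they are distinct and intersect. -/
def Adj2 (A B : Set (Finset V)) : Prop :=
  A ≠ B ∧ ∃ q, q ∈ A ∧ q ∈ B

/-- `s` induces a 4-cycle in `G`. -/
def InducesC4 [DecidableEq V] (G : SimpleGraph V) (s : Finset V) : Prop :=
  ∃ a b c d : V, a ≠ b ∧ a ≠ c ∧ a ≠ d ∧ b ≠ c ∧ b ≠ d ∧ c ≠ d ∧
    s = ({a, b, c, d} : Finset V) ∧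
    G.Adj a b ∧ G.Adj b c ∧ G.Adj c d ∧ G.Adj d a ∧ ¬ G.Adj a c ∧ ¬ G.Adj b d

/-- The octahedron, i.e. the complete tripartite graph `K_{2,2,2}`. -/
def octahedron : SimpleGraph (Fin 3 × Fin 2) where
  Adj a b := a.1 ≠ b.1
  symm := ⟨fun _ _ h => h.symm⟩
  loopless := ⟨fun _ h => h rfl⟩

/-- The clique graph `K(G)`: the intersection graph of the cliques of `G`. -/
def cliqueGraph (G : SimpleGraph V) : SimpleGraph {q : Finset V // MaxClique G q} where
  Adj q r := q ≠ r ∧ ∃ v, v ∈ q.1 ∧ v ∈ r.1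
  symm := ⟨fun _ _ h => ⟨h.1.symm, h.2.imp fun _ hv => ⟨hv.2, hv.1⟩⟩⟩
  loopless := ⟨fun _ h => h.1 rfl⟩

/-- A graph is clique-Helly when its family of cliques has the Helly property. -/
def CliqueHelly {W : Type*} (H : SimpleGraph W) : Prop :=
  ∀ F : Set (Finset W), F.Nonempty → (∀ q ∈ F, MaxClique H q) →
    PairwiseIntersecting F → ∃ v, ∀ q ∈ F, v ∈ q

/-- Hereditary clique-Helly: every induced subgraph is clique-Helly. -/
def HereditaryCliqueHelly {W : Type*} (H : SimpleGraph W) : Prop :=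
  ∀ s : Set W, CliqueHelly (SimpleGraph.induce s H)

/-- A finite graph packaged with its vertex type, to allow iterating `K`. -/
structure FGraph where
  V : Type u
  fin : Fintype V
  G : SimpleGraph V

/-- The clique graph operator on packaged finite graphs. -/
noncomputable def FGraph.K (F : FGraph) : FGraph where
  V := {q : Finset F.V // MaxClique F.G q}
  fin := by
    haveI := F.fin
    classical
    exact Subtype.fintype _
  G := cliqueGraph F.G

/-- Iterated clique graphs: `iterK F n` packages `Kⁿ(G)`. -/
noncomputable def iterK (F : FGraph) : ℕ → FGraph
  | 0 => F
  | n + 1 => (iterK F n).K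

theorem stmt0_general {V : Type u} [DecidableEq V] (G : SimpleGraph V)
    (q1 q2 : Finset V)
    (hedge : ∀ x y : V, G.Adj x y → x ∈ q1 ∪ q2 → y ∈ q1 ∪ q2 →
      x ∈ q1 ∩ q2 ∨ y ∈ q1 ∩ q2)
    (c : Finset V) (hc : G.IsClique (c : Set V)) (hsub : c ⊆ q1 ∪ q2) :
    c ⊆ q1 ∨ c ⊆ q2 := by
  by_contra! h
  obtain ⟨⟨x, hxc, hx1⟩, ⟨y, hyc, hy2⟩⟩ := And.intro
    (Finset.not_subset.mp h.1) (Finset.not_subset.mp h.2)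
  have hy1 : y ∈ q1 := (Finset.mem_union.mp (hsub hyc)).resolve_right hy2
  have hxy : x ≠ y := by rintro rfl; exact hx1 hy1
  rcases hedge x y (hc hxc hyc hxy) (hsub hxc) (hsub hyc) with hx | hy
  · exact hx1 (Finset.mem_of_mem_inter_left hx)
  · exact hy2 (Finset.mem_of_mem_inter_right hy)

theorem stmt0 {V : Type u} [DecidableEq V] (G : SimpleGraph V)
    (q1 q2 : Finset V) (h1 : MaxClique G q1) (h2 : MaxClique G q2)
    (hedge : ∀ x y : V, G.Adj x y → x ∈ q1 ∪ q2 → y ∈ q1 ∪ q2 →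
      x ∈ q1 ∩ q2 ∨ y ∈ q1 ∩ q2)
    (c : Finset V) (hc : G.IsClique (c : Set V)) (hsub : c ⊆ q1 ∪ q2) :
    c ⊆ q1 ∨ c ⊆ q2 :=
  stmt0_general G q1 q2 hedge c hc hsub
end

section
/- If G is a graph with maximum degree at most 4, then every clique of G that belongs to a necktie of G is a triangle (has exactly 3 vertices). -/
universe u

variable {V : Type u}

/-!
A member `q` of a necktie `Q` cannot have at most two vertices: a vertex `w` common to a member
missing `u` and a member missing `v` would be adjacent to both vertices of `q = {u, v}` and so
extend `q`. Nor can it have at least four: then `Δ ≤ 4` leaves each vertex of `q` at most one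
neighbour outside `q`, so every other member of `Q` leaves `q` through one and the same vertex `w`
and is the clique formed by `w` and its neighbours in `q`. Thus `Q ⊆ {q, r}`, and a vertex of
`q ∩ r` lies in every member of `Q`.
-/

variable {G : SimpleGraph V}

namespace SimpleGraph

lemma IsClique.neighborSet_diff_subsingleton {q : Finset V} {x : V} [Fintype (G.neighborSet x)]
    (hq : G.IsClique (q : Set V)) (hx : x ∈ q) (hdeg : G.degree x ≤ q.card) :
    (G.neighborSet x \ ↑q).Subsingleton := by
  classical
  have hinside : q.erase x ⊆ G.neighborFinset x ∩ q := fun y hy => by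
    obtain ⟨hyx, hyq⟩ := Finset.mem_erase.mp hy
    exact Finset.mem_inter.mpr ⟨(G.mem_neighborFinset x y).mpr (hq hx hyq hyx.symm), hyq⟩
  have hsplit := Finset.card_sdiff_add_card_inter (G.neighborFinset x) q
  have hinside_card := Finset.card_le_card hinside
  rw [Finset.card_erase_of_mem hx] at hinside_card
  rw [G.card_neighborFinset_eq_degree] at hsplit
  rw [← G.coe_neighborFinset, ← Finset.coe_sdiff, ← Finset.card_le_one_iff_subsingleton]
  have : 0 < q.card := Finset.card_pos.mpr ⟨x, hx⟩
  omega

lemma IsClique.diff_subsingleton {r q : Set V} {x : V} (hr : G.IsClique r) (hxr : x ∈ r)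
    (hxq : x ∈ q) (hx : (G.neighborSet x \ q).Subsingleton) : (r \ q).Subsingleton := by
  rintro y ⟨hyr, hyq⟩ z ⟨hzr, hzq⟩
  exact hx ⟨hr hxr hyr (ne_of_mem_of_not_mem hxq hyq), hyq⟩
    ⟨hr hxr hzr (ne_of_mem_of_not_mem hxq hzq), hzq⟩

lemma subset_insert_inter_neighborSet {s t : Set V} {w : V} (hs : G.IsClique s)
    (hws : w ∈ s) (hwt : w ∉ t) (hout : (s \ t).Subsingleton) :
    s ⊆ insert w (t ∩ G.neighborSet w) := by
  intro y hys
  by_cases hyw : y = w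
  · exact Or.inl hyw
  · have hyt : y ∈ t := by
      by_contra hyt
      exact hyw (hout ⟨hys, hyt⟩ ⟨hws, hwt⟩)
    exact Or.inr ⟨hyt, hs hws hys (Ne.symm hyw)⟩

lemma isClique_insert_inter_neighborSet {t : Set V} (ht : G.IsClique t) (w : V) :
    G.IsClique (insert w (t ∩ G.neighborSet w)) :=
  (ht.subset Set.inter_subset_left).insert fun _ hb _ => hb.2

end SimpleGraph

open SimpleGraph

namespace MaxClique

lemma exists_mem_not_mem_of_ne {r q : Finset V} (hr : MaxClique G r)
    (hq : G.IsClique (q : Set V)) (hne : r ≠ q) : ∃ w ∈ r, w ∉ q := by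
  by_contra! h
  exact hne (hr.2 q hq fun w hw => h w hw)

lemma eq_of_neighborSet_diff_subsingleton {q r r' : Finset V} (hq : MaxClique G q)
    (hout : ∀ x ∈ q, (G.neighborSet x \ ↑q).Subsingleton)
    (hr : MaxClique G r) (hr' : MaxClique G r') (hrq : r ≠ q) (hr'q : r' ≠ q)
    (hrq_meet : ∃ x, x ∈ r ∧ x ∈ q) (hr'q_meet : ∃ x, x ∈ r' ∧ x ∈ q)
    (hrr'_meet : ∃ u, u ∈ r ∧ u ∈ r') : r = r' := by
  obtain ⟨x, hxr, hxq⟩ := hrq_meet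
  obtain ⟨x', hx'r', hx'q⟩ := hr'q_meet
  obtain ⟨w, hwr, hwq⟩ := hr.exists_mem_not_mem_of_ne hq.1 hrq
  obtain ⟨w', hw'r', hw'q⟩ := hr'.exists_mem_not_mem_of_ne hq.1 hr'q
  have hrout := hr.1.diff_subsingleton hxr hxq (hout x hxq)
  have hr'out := hr'.1.diff_subsingleton hx'r' hx'q (hout x' hx'q)
  have hww' : w = w' := by
    obtain ⟨u, hur, hur'⟩ := hrr'_meet
    by_cases huq : u ∈ q
    · exact hout u huq ⟨hr.1 hur hwr (ne_of_mem_of_not_mem huq hwq), hwq⟩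
        ⟨hr'.1 hur' hw'r' (ne_of_mem_of_not_mem huq hw'q), hw'q⟩
    · exact (hrout ⟨hwr, hwq⟩ ⟨hur, huq⟩).trans (hr'out ⟨hur', huq⟩ ⟨hw'r', hw'q⟩)
  subst hww'
  classical
  have hunion : G.IsClique ((r ∪ r' : Finset V) : Set V) := by
    refine (isClique_insert_inter_neighborSet hq.1 w).subset ?_
    rw [Finset.coe_union]
    exact Set.union_subset (subset_insert_inter_neighborSet hr.1 hwr hwq hrout)
      (subset_insert_inter_neighborSet hr'.1 hw'r' hwq hr'out)
  exact (hr.2 _ hunion Finset.subset_union_left).trans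
    (hr'.2 _ hunion Finset.subset_union_right).symm

end MaxClique

namespace PairwiseIntersecting

lemma exists_forall_mem_of_card_le_two {Q : Set (Finset V)} {q : Finset V}
    (hQ : PairwiseIntersecting Q) (hcl : ∀ r ∈ Q, G.IsClique (r : Set V)) (hq : q ∈ Q)
    (hqmax : MaxClique G q) (hcard : q.card ≤ 2) : ∃ v, ∀ r ∈ Q, v ∈ r := by
  classical
  by_contra! hmiss
  obtain ⟨u, huq, -⟩ := hQ q hq q hq
  obtain ⟨ru, hru, huru⟩ := hmiss u
  obtain ⟨v, hvq, hvru⟩ := hQ q hq ru hru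
  have huv : u ≠ v := fun h => huru (h ▸ hvru)
  have hquv : q = {u, v} := (Finset.eq_of_subset_of_card_le
    (Finset.insert_subset huq (Finset.singleton_subset_iff.mpr hvq))
    (by rw [Finset.card_pair huv]; exact hcard)).symm
  obtain ⟨rv, hrv, hvrv⟩ := hmiss v
  have hurv : u ∈ rv := by
    obtain ⟨y, hyq, hyrv⟩ := hQ q hq rv hrv
    rw [hquv, Finset.mem_insert, Finset.mem_singleton] at hyq
    rcases hyq with rfl | rfl
    · exact hyrv
    · exact absurd hyrv hvrv
  obtain ⟨w, hwru, hwrv⟩ := hQ ru hru rv hrv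
  have hwu : w ≠ u := fun h => huru (h ▸ hwru)
  have hwv : w ≠ v := fun h => hvrv (h ▸ hwrv)
  have hextend : G.IsClique ((insert w q : Finset V) : Set V) := by
    rw [Finset.coe_insert]
    refine hqmax.1.insert fun b hb _ => ?_
    rw [Finset.mem_coe, hquv, Finset.mem_insert, Finset.mem_singleton] at hb
    rcases hb with rfl | rfl
    · exact hcl rv hrv hwrv hurv hwu
    · exact hcl ru hru hwru hvru hwv
  have hwq : w ∈ q := by
    rw [hqmax.2 _ hextend (Finset.subset_insert w q)]
    exact Finset.mem_insert_self w q
  rw [hquv, Finset.mem_insert, Finset.mem_singleton] at hwq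
  exact hwq.elim hwu hwv

lemma exists_forall_mem_of_neighborSet_diff_subsingleton {Q : Set (Finset V)} {q : Finset V}
    (hQ : PairwiseIntersecting Q) (hmax : ∀ r ∈ Q, MaxClique G r) (hq : q ∈ Q)
    (hout : ∀ x ∈ q, (G.neighborSet x \ ↑q).Subsingleton) : ∃ v, ∀ r ∈ Q, v ∈ r := by
  by_cases hother : ∃ r₀ ∈ Q, r₀ ≠ q
  · obtain ⟨r₀, hr₀, hr₀q⟩ := hother
    obtain ⟨x, hxr₀, hxq⟩ := hQ r₀ hr₀ q hq
    refine ⟨x, fun r hr => ?_⟩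
    by_cases hrq : r = q
    · exact hrq ▸ hxq
    · rw [(hmax q hq).eq_of_neighborSet_diff_subsingleton hout (hmax r hr) (hmax r₀ hr₀) hrq
        hr₀q (hQ r hr q hq) ⟨x, hxr₀, hxq⟩ (hQ r hr r₀ hr₀)]
      exact hxr₀
  · push Not at hother
    obtain ⟨v, hv, -⟩ := hQ q hq q hq
    exact ⟨v, fun r hr => hother r hr ▸ hv⟩

end PairwiseIntersecting

theorem stmt3_general {V : Type u} [Fintype V] (G : SimpleGraph V)
    [DecidableRel G.Adj] (hdeg : ∀ v, G.degree v ≤ 4)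
    (Q : Set (Finset V)) (hQ : IsNecktie G Q) :
    ∀ q ∈ Q, q.card = 3 := by
  obtain ⟨⟨hmax, hpi, -⟩, hno_common⟩ := hQ
  intro q hq
  by_contra hq3
  refine hno_common ?_
  rcases le_or_gt q.card 2 with hsmall | hlarge
  · exact hpi.exists_forall_mem_of_card_le_two (fun r hr => (hmax r hr).1) hq (hmax q hq) hsmall
  · exact hpi.exists_forall_mem_of_neighborSet_diff_subsingleton hmax hq fun x hx =>
      (hmax q hq).1.neighborSet_diff_subsingleton hx ((hdeg x).trans (by omega))

theorem stmt3 {V : Type u} [Fintype V] [DecidableEq V] (G : SimpleGraph V)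
    [DecidableRel G.Adj] (hdeg : ∀ v, G.degree v ≤ 4)
    (Q : Set (Finset V)) (hQ : IsNecktie G Q) :
    ∀ q ∈ Q, q.card = 3 :=
  stmt3_general G hdeg Q hQ
end

section
/- Let G be a graph with maximum degree at most 4 and Q a necktie of G. Then no member of Q is an edge (a clique with exactly 2 vertices). -/
/-!
If the edge `{a, b}` belongs to a necktie `Q`, then, as `Q` has no common vertex, some
member `r` of `Q` misses `b` and some member `r'` misses `a`. Since both meet `{a, b}`,
`a ∈ r` and `b ∈ r'`, and a common vertex `v` of `r` and `r'` is then adjacent to both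
`a` and `b`, so `{a, b, v}` is a clique, contradicting the maximality of `{a, b}`.
-/

universe u

variable {V : Type u}

section

variable {G : SimpleGraph V}

theorem MaxClique.mem_of_forall_adj {s : Finset V} (hs : MaxClique G s) {v : V}
    (hv : ∀ w ∈ s, w ≠ v → G.Adj v w) : v ∈ s := by
  classical
  have hclique : G.IsClique (↑(insert v s) : Set V) := by
    rw [Finset.coe_insert]
    exact hs.1.insert fun w hw hne => hv w hw hne.symm
  rw [hs.2 _ hclique (Finset.subset_insert v s)]
  exact Finset.mem_insert_self v s

theorem MaxClique.adj {s : Finset V} (hs : MaxClique G s) {v w : V} (hv : v ∈ s) (hw : w ∈ s)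
    (hne : v ≠ w) : G.Adj v w :=
  hs.1 (Finset.mem_coe.2 hv) (Finset.mem_coe.2 hw) hne

theorem PairwiseIntersecting.mem_of_pair_mem [DecidableEq V] {Q : Set (Finset V)}
    (hQ : PairwiseIntersecting Q) {a b : V} (hab : {a, b} ∈ Q) {r : Finset V} (hr : r ∈ Q)
    (hbr : b ∉ r) : a ∈ r := by
  obtain ⟨x, hx, hxr⟩ := hQ _ hab _ hr
  rcases Finset.mem_insert.1 hx with rfl | hxb
  · exact hxr
  · exact absurd (Finset.mem_singleton.1 hxb ▸ hxr) hbr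

end

theorem stmt4_general {V : Type u} (G : SimpleGraph V)
    (Q : Set (Finset V)) (hQ : IsNecktie G Q) :
    ∀ q ∈ Q, q.card ≠ 2 := by
  classical
  rintro q hq hcard
  obtain ⟨⟨hmax, hpair, -⟩, hnoCommon⟩ := hQ
  push Not at hnoCommon
  obtain ⟨a, b, hab, rfl⟩ := Finset.card_eq_two.1 hcard
  obtain ⟨r, hr, hbr⟩ := hnoCommon b
  obtain ⟨r', hr', har'⟩ := hnoCommon a
  have har : a ∈ r := hpair.mem_of_pair_mem hq hr hbr
  have hbr' : b ∈ r' := hpair.mem_of_pair_mem (Finset.pair_comm a b ▸ hq) hr' har'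
  obtain ⟨v, hvr, hvr'⟩ := hpair _ hr _ hr'
  have hva : v ≠ a := fun h => har' (h ▸ hvr')
  have hvb : v ≠ b := fun h => hbr (h ▸ hvr)
  have hv : v ∈ ({a, b} : Finset V) := (hmax _ hq).mem_of_forall_adj fun w hw _ => by
    rcases Finset.mem_insert.1 hw with rfl | hwb
    · exact (hmax _ hr).adj hvr har hva
    · exact Finset.mem_singleton.1 hwb ▸ (hmax _ hr').adj hvr' hbr' hvb
  simp only [Finset.mem_insert, Finset.mem_singleton] at hv
  exact hv.elim hva hvb

theorem stmt4 {V : Type u} [Fintype V] [DecidableEq V] (G : SimpleGraph V)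
    [DecidableRel G.Adj] (hdeg : ∀ v, G.degree v ≤ 4)
    (Q : Set (Finset V)) (hQ : IsNecktie G Q) :
    ∀ q ∈ Q, q.card ≠ 2 :=
  stmt4_general G Q hQ
end

section
/- Let G be a graph with maximum degree at most 4 and Q a necktie of G. Then no member of Q has 4 or more vertices. -/
/-!
If `Δ(G) ≤ 4` and the clique `q` has at least four vertices, every vertex of `q` has at most one
neighbour outside `q`. Hence every other clique `r` meeting `q` has exactly one vertex `w` outside
`q`; it is the same `w` for all such `r` (two of them meet either inside `q`, at a vertex adjacent
to both outside vertices, or outside `q`), and then `r` must be the maximal clique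
`{w} ∪ (N(w) ∩ q)`. So a pairwise-intersecting family of cliques containing `q` has at most two
members, and they share a vertex.
-/

universe u

variable {V : Type u}

open Finset

variable {G : SimpleGraph V}

theorem SimpleGraph.IsClique.subsingleton_neighborSet_diff [Fintype V] [DecidableRel G.Adj]
    {q : Finset V} (hq : G.IsClique (q : Set V)) {u : V} (hu : u ∈ q)
    (hdeg : G.degree u ≤ #q) : (G.neighborSet u \ q).Subsingleton := by
  classical
  have hinter : q.erase u ⊆ G.neighborFinset u ∩ q := fun x hx =>
    mem_inter.2 ⟨(G.mem_neighborFinset u x).2 (hq hu (mem_of_mem_erase hx) (ne_of_mem_erase hx).symm),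
      mem_of_mem_erase hx⟩
  have hcard : #(G.neighborFinset u \ q) ≤ 1 := by
    have hsplit := card_sdiff_add_card_inter (G.neighborFinset u) q
    have hle := card_le_card hinter
    rw [card_erase_of_mem hu] at hle
    rw [G.card_neighborFinset_eq_degree] at hsplit
    omega
  rw [← G.coe_neighborFinset, ← coe_sdiff]
  exact fun a ha b hb => card_le_one.1 hcard a ha b hb

section

variable [DecidableEq V] {q r : Finset V} {v w : V}

theorem SimpleGraph.IsClique.mem_neighborSet_diff_of_mem_sdiff (hr : G.IsClique (r : Set V))
    (hvr : v ∈ r) (hvq : v ∈ q) {x : V} (hx : x ∈ r \ q) : x ∈ G.neighborSet v \ q := by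
  obtain ⟨hxr, hxq⟩ := mem_sdiff.1 hx
  exact ⟨hr hvr hxr (by rintro rfl; exact hxq hvq), hxq⟩

theorem MaxClique.exists_sdiff_eq_singleton (hr : MaxClique G r) (hq : G.IsClique (q : Set V))
    (hne : r ≠ q) (hvr : v ∈ r) (hvq : v ∈ q) (hsub : (G.neighborSet v \ q).Subsingleton) :
    ∃ w, r \ q = {w} := by
  obtain ⟨w, hw⟩ := sdiff_nonempty.2 fun hrq => hne (hr.2 q hq hrq)
  refine ⟨w, eq_singleton_iff_unique_mem.2 ⟨hw, fun x hx => hsub ?_ ?_⟩⟩ <;>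
    exact hr.1.mem_neighborSet_diff_of_mem_sdiff hvr hvq ‹_›

theorem MaxClique.eq_of_sdiff_eq_singleton {r' : Finset V} (hr : MaxClique G r)
    (hr' : MaxClique G r') (hq : G.IsClique (q : Set V)) (hw : r \ q = {w}) (hw' : r' \ q = {w}) :
    r = r' := by
  classical
  suffices h : ∀ s, MaxClique G s → s \ q = {w} → s = insert w {x ∈ q | G.Adj w x} from
    (h r hr hw).trans (h r' hr' hw').symm
  intro s hs hsw
  have hws : w ∈ s := (mem_sdiff.1 (hsw ▸ mem_singleton_self w)).1
  refine hs.2 _ ?_ fun x hxs => ?_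
  · rw [coe_insert, SimpleGraph.isClique_insert]
    exact ⟨hq.subset fun x hx => (mem_filter.1 hx).1, fun x hx _ => (mem_filter.1 hx).2⟩
  · by_cases hxq : x ∈ q
    · rcases eq_or_ne x w with rfl | hxw
      · exact mem_insert_self x _
      · exact mem_insert_of_mem (mem_filter.2 ⟨hxq, hs.1 hws hxs hxw.symm⟩)
    · have hx : x ∈ s \ q := mem_sdiff.2 ⟨hxs, hxq⟩
      rw [hsw, mem_singleton] at hx
      exact hx ▸ mem_insert_self _ _

theorem eq_of_sdiff_eq_singleton_of_subsingleton_neighborSet_diff {r' : Finset V} {w' : V}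
    (hr : G.IsClique (r : Set V)) (hr' : G.IsClique (r' : Set V))
    (hsub : ∀ u ∈ q, (G.neighborSet u \ q).Subsingleton) (hmeet : ∃ x, x ∈ r ∧ x ∈ r')
    (hw : r \ q = {w}) (hw' : r' \ q = {w'}) : w = w' := by
  obtain ⟨x, hxr, hxr'⟩ := hmeet
  have hwr : w ∈ r \ q := hw ▸ mem_singleton_self w
  have hwr' : w' ∈ r' \ q := hw' ▸ mem_singleton_self w'
  by_cases hxq : x ∈ q
  · exact hsub x hxq (hr.mem_neighborSet_diff_of_mem_sdiff hxr hxq hwr)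
      (hr'.mem_neighborSet_diff_of_mem_sdiff hxr' hxq hwr')
  · have hx : x ∈ r \ q := mem_sdiff.2 ⟨hxr, hxq⟩
    have hx' : x ∈ r' \ q := mem_sdiff.2 ⟨hxr', hxq⟩
    rw [hw, mem_singleton] at hx
    rw [hw', mem_singleton] at hx'
    exact hx.symm.trans hx'

end

theorem PairwiseIntersecting.exists_forall_mem {Q : Set (Finset V)} (hpair : PairwiseIntersecting Q)
    (hQ : ∀ r ∈ Q, MaxClique G r) {q : Finset V} (hqQ : q ∈ Q)
    (hsub : ∀ u ∈ q, (G.neighborSet u \ q).Subsingleton) : ∃ v, ∀ r ∈ Q, v ∈ r := by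
  classical
  have hq := (hQ q hqQ).1
  have houtside : ∀ r ∈ Q, r ≠ q → ∃ w, r \ q = {w} := fun r hr hne =>
    have ⟨_, hvr, hvq⟩ := hpair r hr q hqQ
    (hQ r hr).exists_sdiff_eq_singleton hq hne hvr hvq (hsub _ hvq)
  have hunique : ∀ r ∈ Q, ∀ r' ∈ Q, r ≠ q → r' ≠ q → r = r' := by
    intro r hr r' hr' hne hne'
    obtain ⟨w, hw⟩ := houtside r hr hne
    obtain ⟨w', hw'⟩ := houtside r' hr' hne'
    obtain rfl := eq_of_sdiff_eq_singleton_of_subsingleton_neighborSet_diff (hQ r hr).1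
      (hQ r' hr').1 hsub (hpair r hr r' hr') hw hw'
    exact (hQ r hr).eq_of_sdiff_eq_singleton (hQ r' hr') hq hw hw'
  by_cases hother : ∃ r₀ ∈ Q, r₀ ≠ q
  · obtain ⟨r₀, hr₀, hne₀⟩ := hother
    obtain ⟨v, hvq, hvr₀⟩ := hpair q hqQ r₀ hr₀
    refine ⟨v, fun r hr => ?_⟩
    rcases eq_or_ne r q with rfl | hne
    · exact hvq
    · rwa [hunique r hr r₀ hr₀ hne hne₀]
  · push Not at hother
    obtain ⟨v, hvq, -⟩ := hpair q hqQ q hqQ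
    exact ⟨v, fun r hr => hother r hr ▸ hvq⟩

theorem stmt5_general {V : Type u} [Fintype V] (G : SimpleGraph V)
    [DecidableRel G.Adj] (hdeg : ∀ v, G.degree v ≤ 4)
    (Q : Set (Finset V)) (hQ : IsNecktie G Q) :
    ∀ q ∈ Q, q.card < 4 := by
  obtain ⟨⟨hmax, hpair, -⟩, hnone⟩ := hQ
  intro q hqQ
  by_contra! hcard
  exact hnone <| hpair.exists_forall_mem hmax hqQ fun u hu =>
    (hmax q hqQ).1.subsingleton_neighborSet_diff hu ((hdeg u).trans hcard)

theorem stmt5 {V : Type u} [Fintype V] [DecidableEq V] (G : SimpleGraph V)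
    [DecidableRel G.Adj] (hdeg : ∀ v, G.degree v ≤ 4)
    (Q : Set (Finset V)) (hQ : IsNecktie G Q) :
    ∀ q ∈ Q, q.card < 4 :=
  stmt5_general G hdeg Q hQ
end

section
/- Let G be a connected graph with maximum degree at most 4 that is not isomorphic to the octahedron (the complete tripartite graph K_{2,2,2}). If T is an inner triangle of G, then Q_T = {q : q is a clique of G with |q ∩ T| ≥ 2} is a necktie of G consisting of exactly 4 cliques: T itself and three triangles, one through each edge of T. -/
universe u

variable {V : Type u}

/-!
Write `w z` for a vertex completing the edge `T \ {z}` of `T` to a triangle other than `T`; it lies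
outside `T`, and maximality of `T` forces `w z ≁ z`. A vertex `x ∈ T` then has the four distinct
neighbours `T \ {x}`, `w y`, `w z` (with `T = {x, y, z}`), so `Δ ≤ 4` determines its
neighbourhood: the common neighbours of the edge `T \ {z}` are exactly `z` and `w z`, which are
non-adjacent. Hence the cliques containing an edge of `T` are `T` and the three triangles
`(T \ {z}) ∪ {w z}`. Any two of them share a vertex of `T`, no vertex lies in all of them, and a
clique meeting all of them and containing `z ∈ T` must meet `(T \ {z}) ∪ {w z}` inside `T`,
because `w z ≁ z`; so it too meets `T` in two vertices.
-/

namespace MaxClique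

variable {G : SimpleGraph V} {s t : Finset V} {x y : V}

theorem adj_s6 (hs : MaxClique G s) (hx : x ∈ s) (hy : y ∈ s) (hxy : x ≠ y) : G.Adj x y :=
  hs.1 hx hy hxy

theorem eq_of_subset (hs : MaxClique G s) (ht : G.IsClique (t : Set V)) (hst : s ⊆ t) : t = s :=
  (hs.2 t ht hst).symm

theorem exists_not_adj [DecidableEq V] (hs : MaxClique G s) (hx : x ∉ s) :
    ∃ z ∈ s, ¬ G.Adj z x := by
  by_contra! h
  have hclique : G.IsClique ((insert x s : Finset V) : Set V) := by
    rw [Finset.coe_insert]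
    exact hs.1.insert fun z hz _ => (h z hz).symm
  exact hx (hs.eq_of_subset hclique (Finset.subset_insert x s) ▸ Finset.mem_insert_self x s)

end MaxClique

section CommonNeighbours

variable [DecidableEq V] {G : SimpleGraph V} {e t : Finset V} {z w : V}

theorem subset_insert_or_subset_insert_of_forall_adj_iff
    (hcommon : ∀ v, (∀ u ∈ e, G.Adj u v) ↔ v = z ∨ v = w) (hzw : ¬ G.Adj z w)
    (ht : G.IsClique (t : Set V)) (het : e ⊆ t) : t ⊆ insert z e ∨ t ⊆ insert w e := by
  have hout : ∀ v ∈ t, v ∉ e → v = z ∨ v = w := fun v hv hve =>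
    (hcommon v).1 fun u hu => ht (het hu) hv (ne_of_mem_of_not_mem hu hve)
  by_cases hz : z ∈ t
  · left
    intro v hv
    by_cases hve : v ∈ e
    · exact Finset.mem_insert_of_mem hve
    rcases hout v hv hve with rfl | rfl
    · exact Finset.mem_insert_self v e
    · by_cases hvz : z = v
      · exact hvz ▸ Finset.mem_insert_self z e
      · exact absurd (ht hz hv hvz) hzw
  · right
    intro v hv
    by_cases hve : v ∈ e
    · exact Finset.mem_insert_of_mem hve
    rcases hout v hv hve with rfl | rfl
    · exact absurd hv hz
    · exact Finset.mem_insert_self v e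

theorem maxClique_insert_of_forall_adj_iff (he : G.IsClique (e : Set V))
    (hcommon : ∀ v, (∀ u ∈ e, G.Adj u v) ↔ v = z ∨ v = w) (hzw : ¬ G.Adj z w) :
    MaxClique G (insert z e) := by
  have hz : ∀ u ∈ e, G.Adj u z := (hcommon z).2 (Or.inl rfl)
  have hze : z ∉ e := fun h => G.loopless.irrefl z (hz z h)
  refine ⟨by rw [Finset.coe_insert]; exact he.insert fun u hu _ => (hz u hu).symm,
    fun t ht hzt => ?_⟩
  rcases subset_insert_or_subset_insert_of_forall_adj_iff hcommon hzw ht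
    ((Finset.subset_insert z e).trans hzt) with h | h
  · exact hzt.antisymm h
  · obtain rfl : z = w :=
      (Finset.mem_insert.1 (h (hzt (Finset.mem_insert_self z e)))).resolve_right hze
    exact hzt.antisymm h

theorem maxClique_iff_of_forall_adj_iff (he : G.IsClique (e : Set V))
    (hcommon : ∀ v, (∀ u ∈ e, G.Adj u v) ↔ v = z ∨ v = w) (hzw : ¬ G.Adj z w)
    {q : Finset V} (heq : e ⊆ q) : MaxClique G q ↔ q = insert z e ∨ q = insert w e := by
  have hcommon' : ∀ v, (∀ u ∈ e, G.Adj u v) ↔ v = w ∨ v = z :=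
    fun v => (hcommon v).trans or_comm
  have hwz : ¬ G.Adj w z := fun h => hzw h.symm
  refine ⟨fun hq => ?_, ?_⟩
  · rcases subset_insert_or_subset_insert_of_forall_adj_iff hcommon hzw hq.1 heq with h | h
    · exact Or.inl (hq.eq_of_subset (maxClique_insert_of_forall_adj_iff he hcommon hzw).1 h).symm
    · exact Or.inr (hq.eq_of_subset (maxClique_insert_of_forall_adj_iff he hcommon' hwz).1 h).symm
  · rintro (rfl | rfl)
    · exact maxClique_insert_of_forall_adj_iff he hcommon hzw
    · exact maxClique_insert_of_forall_adj_iff he hcommon' hwz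

end CommonNeighbours

section Necktie

variable [DecidableEq V] {G : SimpleGraph V} {T : Finset V}

theorem pairwiseIntersecting_QT (hT : T.card ≤ 3) : PairwiseIntersecting (QT G T) := by
  intro q hq r hr
  obtain ⟨v, hv⟩ := Finset.inter_nonempty_of_card_lt_card_add_card
    (Finset.inter_subset_right : q ∩ T ⊆ T) (Finset.inter_subset_right : r ∩ T ⊆ T)
    (by have := hq.2; have := hr.2; omega)
  simp only [Finset.mem_inter] at hv
  exact ⟨v, hv.1.1, hv.2.1⟩

theorem isNecktie_QT (hTQ : T ∈ QT G T) (hT : T.card ≤ 3)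
    (hopp : ∀ v ∈ T, ∃ r ∈ QT G T, v ∉ r ∧ ∀ u ∈ r, u ∉ T → ¬ G.Adj v u) :
    IsNecktie G (QT G T) := by
  refine ⟨⟨fun q hq => hq.1, pairwiseIntersecting_QT hT, fun Q hQ hmax hpair => ?_⟩, ?_⟩
  · refine (Set.Subset.antisymm (fun q hq => ⟨hmax q hq, ?_⟩) hQ)
    obtain ⟨v, hvq, hvT⟩ := hpair q hq T (hQ hTQ)
    obtain ⟨r, hr, hvr, hr_nadj⟩ := hopp v hvT
    obtain ⟨u, huq, hur⟩ := hpair q hq r (hQ hr)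
    have hvu : v ≠ u := (ne_of_mem_of_not_mem hur hvr).symm
    have huT : u ∈ T := by_contra fun huT => hr_nadj u hur huT ((hmax q hq).adj_s6 hvq huq hvu)
    calc 2 = ({v, u} : Finset V).card := (Finset.card_pair hvu).symm
      _ ≤ (q ∩ T).card := Finset.card_le_card (by
          intro x hx
          rcases Finset.mem_insert.1 hx with rfl | hx
          · exact Finset.mem_inter.2 ⟨hvq, hvT⟩
          · rw [Finset.mem_singleton.1 hx]; exact Finset.mem_inter.2 ⟨huq, huT⟩)
  · rintro ⟨v, hv⟩
    obtain ⟨r, hr, hvr, -⟩ := hopp v (hv T hTQ)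
    exact hvr (hv r hr)

end Necktie

theorem SimpleGraph.mem_of_adj_of_degree_le [DecidableEq V] {G : SimpleGraph V} {x v : V}
    [Fintype (G.neighborSet x)] {s : Finset V} (hdeg : G.degree x ≤ s.card)
    (hs : ∀ u ∈ s, G.Adj x u) (hv : G.Adj x v) : v ∈ s := by
  have hs_eq : s = G.neighborFinset x :=
    Finset.eq_of_subset_of_card_le (fun u hu => (G.mem_neighborFinset x u).2 (hs u hu)) hdeg
  exact hs_eq ▸ (G.mem_neighborFinset x v).2 hv

theorem Finset.exists_erase_eq_pair {α : Type*} [DecidableEq α] {s : Finset α} {x y : α}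
    (hs : s.card = 3) (hx : x ∈ s) (hy : y ∈ s) (hxy : x ≠ y) :
    ∃ z ∈ s, s.erase z = {x, y} := by
  have hpair : ({x, y} : Finset α) ⊆ s :=
    Finset.insert_subset hx (Finset.singleton_subset_iff.2 hy)
  obtain ⟨z, hz, hzxy⟩ := Finset.exists_mem_notMem_of_card_lt_card
    (by rw [Finset.card_pair hxy, hs]; omega : ({x, y} : Finset α).card < s.card)
  refine ⟨z, hz, (Finset.eq_of_subset_of_card_le ?_ ?_).symm⟩
  · exact fun u hu => Finset.mem_erase.2 ⟨fun h => hzxy (h ▸ hu), hpair hu⟩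
  · rw [Finset.card_erase_of_mem hz, hs, Finset.card_pair hxy]

section Apex

variable [DecidableEq V] {G : SimpleGraph V} {T : Finset V} {z w : V}

def IsApex (G : SimpleGraph V) (T : Finset V) (z w : V) : Prop :=
  w ∉ T ∧ (∀ u ∈ T.erase z, G.Adj u w) ∧ ¬ G.Adj z w

theorem IsInnerTriangle.exists_isApex (hT : IsInnerTriangle G T) (hz : z ∈ T) :
    ∃ w, IsApex G T z w := by
  obtain ⟨hTmax, hcard, hinner⟩ := hT
  obtain ⟨x, y, hxy, hxy_eq⟩ :=
    Finset.card_eq_two.1 (by rw [Finset.card_erase_of_mem hz, hcard] : (T.erase z).card = 2)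
  have hx : x ∈ T := Finset.mem_of_mem_erase (hxy_eq ▸ Finset.mem_insert_self x {y})
  have hy : y ∈ T := Finset.mem_of_mem_erase (hxy_eq ▸ Finset.mem_insert_of_mem
    (Finset.mem_singleton_self y))
  obtain ⟨T', ⟨hT'clique, hT'card⟩, -, hTT'⟩ := hinner x hx y hy hxy
  obtain ⟨w', hw'T', hw'xy⟩ := Finset.exists_mem_notMem_of_card_lt_card
    (by rw [Finset.card_pair hxy, hT'card]; omega : ({x, y} : Finset V).card < T'.card)
  have hw'T : w' ∉ T := fun h => hw'xy (hTT' ▸ Finset.mem_inter.2 ⟨h, hw'T'⟩)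
  have hadj : ∀ u ∈ T.erase z, G.Adj u w' := by
    intro u hu
    obtain ⟨huT, huT'⟩ := Finset.mem_inter.1 (hTT' ▸ hxy_eq ▸ hu : u ∈ T ∩ T')
    exact hT'clique huT' hw'T' fun h => hw'T (h ▸ huT)
  obtain ⟨z', hz', hz'w'⟩ := hTmax.exists_not_adj hw'T
  obtain rfl : z' = z := by_contra fun h => hz'w' (hadj z' (Finset.mem_erase.2 ⟨h, hz'⟩))
  exact ⟨w', hw'T, hadj, hz'w'⟩

theorem IsApex.insert_erase_inter (hw : IsApex G T z w) :
    insert w (T.erase z) ∩ T = T.erase z := by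
  rw [Finset.insert_inter_of_notMem hw.1, Finset.inter_eq_left.2 (Finset.erase_subset z T)]

theorem IsApex.notMem_insert_erase (hw : IsApex G T z w) (hz : z ∈ T) :
    z ∉ insert w (T.erase z) := by
  rw [Finset.mem_insert, not_or]
  exact ⟨fun h => hw.1 (h ▸ hz), Finset.notMem_erase z T⟩

theorem IsApex.insert_erase_ne {z' w' : V} (hw : IsApex G T z w) (hw' : IsApex G T z' w')
    (hz' : z' ∈ T) (hzz' : z ≠ z') : insert w (T.erase z) ≠ insert w' (T.erase z') := by
  intro h
  have herase : T.erase z = T.erase z' := by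
    rw [← hw.insert_erase_inter, ← hw'.insert_erase_inter, h]
  exact Finset.notMem_erase z' T (herase ▸ Finset.mem_erase.2 ⟨hzz'.symm, hz'⟩)

theorem IsApex.isTriangle (hT : G.IsClique (T : Set V)) (hcard : T.card = 3) (hz : z ∈ T)
    (hw : IsApex G T z w) : IsTriangle G (insert w (T.erase z)) := by
  refine ⟨?_, ?_⟩
  · rw [Finset.coe_insert]
    exact (hT.subset (Finset.coe_subset.2 (Finset.erase_subset z T))).insert
      fun u hu _ => (hw.2.1 u hu).symm
  · rw [Finset.card_insert_of_notMem fun h => hw.1 (Finset.mem_of_mem_erase h),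
      Finset.card_erase_of_mem hz, hcard]

end Apex

section DegreeFour

variable [DecidableEq V] {G : SimpleGraph V} [G.LocallyFinite] {T : Finset V} {z : V} {w : V → V}

theorem forall_adj_iff_of_isApex (hT : G.IsClique (T : Set V)) (hcard : T.card = 3)
    (hw : ∀ z ∈ T, IsApex G T z (w z)) (hdeg : ∀ x ∈ T, G.degree x ≤ 4) (hz : z ∈ T)
    (v : V) : (∀ u ∈ T.erase z, G.Adj u v) ↔ v = z ∨ v = w z := by
  have hsize : (T.erase z).card = 2 := by rw [Finset.card_erase_of_mem hz, hcard]
  obtain ⟨x, y, hxy, hxy_eq⟩ := Finset.card_eq_two.1 hsize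
  have hxz : x ∈ T.erase z := hxy_eq ▸ Finset.mem_insert_self x {y}
  have hyz : y ∈ T.erase z := hxy_eq ▸ Finset.mem_insert_of_mem (Finset.mem_singleton_self y)
  have hxT := Finset.mem_of_mem_erase hxz
  have hyT := Finset.mem_of_mem_erase hyz
  refine ⟨fun hv => ?_, ?_⟩
  · -- `T \ {x}`, `w y` and `w z` are four distinct neighbours of `x`, hence all of them
    set s := insert (w z) (insert (w y) (T.erase x))
    have hwzy : w z ≠ w y := fun h => (hw y hyT).2.2 (h ▸ (hw z hz).2.1 y hyz)
    have hs_card : s.card = 4 := by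
      rw [Finset.card_insert_of_notMem, Finset.card_insert_of_notMem,
        Finset.card_erase_of_mem hxT, hcard]
      · exact fun h => (hw y hyT).1 (Finset.mem_of_mem_erase h)
      · simp only [Finset.mem_insert, not_or]
        exact ⟨hwzy, fun h => (hw z hz).1 (Finset.mem_of_mem_erase h)⟩
    have hs_adj : ∀ u ∈ s, G.Adj x u := by
      simp only [s, Finset.forall_mem_insert]
      refine ⟨(hw z hz).2.1 x hxz, (hw y hyT).2.1 x (Finset.mem_erase.2 ⟨hxy, hxT⟩), ?_⟩
      exact fun u hu => hT hxT (Finset.mem_of_mem_erase hu) (Finset.ne_of_mem_erase hu).symm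
    have hvs := SimpleGraph.mem_of_adj_of_degree_le (hs_card ▸ hdeg x hxT) hs_adj (hv x hxz)
    simp only [s, Finset.mem_insert] at hvs
    rcases hvs with rfl | rfl | hvx
    · exact Or.inr rfl
    · exact absurd (hv y hyz) (hw y hyT).2.2
    · by_contra! hvzw
      have hvxy : v ∈ ({x, y} : Finset V) :=
        hxy_eq ▸ Finset.mem_erase.2 ⟨hvzw.1, Finset.mem_of_mem_erase hvx⟩
      rcases Finset.mem_insert.1 hvxy with rfl | hvy
      · exact Finset.ne_of_mem_erase hvx rfl
      · exact (hv y hyz).ne (Finset.mem_singleton.1 hvy).symm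
  · rintro (rfl | rfl)
    · exact fun u hu => hT (Finset.mem_of_mem_erase hu) hz (Finset.ne_of_mem_erase hu)
    · exact (hw z hz).2.1

theorem maxClique_iff_of_isApex (hT : G.IsClique (T : Set V)) (hcard : T.card = 3)
    (hw : ∀ z ∈ T, IsApex G T z (w z)) (hdeg : ∀ x ∈ T, G.degree x ≤ 4) (hz : z ∈ T)
    {q : Finset V} (hq : T.erase z ⊆ q) :
    MaxClique G q ↔ q = T ∨ q = insert (w z) (T.erase z) := by
  rw [maxClique_iff_of_forall_adj_iff (hT.subset (Finset.coe_subset.2 (Finset.erase_subset z T)))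
    (forall_adj_iff_of_isApex hT hcard hw hdeg hz) (hw z hz).2.2 hq, Finset.insert_erase hz]

theorem mem_QT_iff_of_isApex (hT : MaxClique G T) (hcard : T.card = 3)
    (hw : ∀ z ∈ T, IsApex G T z (w z)) (hdeg : ∀ x ∈ T, G.degree x ≤ 4) {q : Finset V} :
    q ∈ QT G T ↔ q = T ∨ ∃ z ∈ T, q = insert (w z) (T.erase z) := by
  refine ⟨fun ⟨hq, hq_card⟩ => ?_, ?_⟩
  · by_cases hTq : T ⊆ q
    · exact Or.inl (hT.eq_of_subset hq.1 hTq)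
    obtain ⟨z, hz, hzq⟩ := Finset.not_subset.1 hTq
    have hqT : q ∩ T = T.erase z := Finset.eq_of_subset_of_card_le
      (fun u hu => Finset.mem_erase.2 ⟨fun h => hzq (h ▸ (Finset.mem_inter.1 hu).1),
        (Finset.mem_inter.1 hu).2⟩)
      (by rw [Finset.card_erase_of_mem hz, hcard]; exact hq_card)
    have hTq : T.erase z ⊆ q := hqT ▸ Finset.inter_subset_left
    exact ((maxClique_iff_of_isApex hT.1 hcard hw hdeg hz hTq).1 hq).imp_right
      fun h => ⟨z, hz, h⟩
  · rintro (rfl | ⟨z, hz, rfl⟩)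
    · exact ⟨hT, by rw [Finset.inter_self, hcard]; omega⟩
    · refine ⟨(maxClique_iff_of_isApex hT.1 hcard hw hdeg hz (Finset.subset_insert _ _)).2
        (Or.inr rfl), ?_⟩
      rw [(hw z hz).insert_erase_inter, Finset.card_erase_of_mem hz, hcard]

theorem isNecktie_QT_of_isApex (hT : MaxClique G T) (hcard : T.card = 3)
    (hw : ∀ z ∈ T, IsApex G T z (w z)) (hdeg : ∀ x ∈ T, G.degree x ≤ 4) :
    IsNecktie G (QT G T) := by
  refine isNecktie_QT ((mem_QT_iff_of_isApex hT hcard hw hdeg).2 (Or.inl rfl)) hcard.le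
    fun z hz => ⟨_, (mem_QT_iff_of_isApex hT hcard hw hdeg).2 (Or.inr ⟨z, hz, rfl⟩), ?_, ?_⟩
  · exact (hw z hz).notMem_insert_erase hz
  · intro u hu huT
    rcases Finset.mem_insert.1 hu with rfl | hu
    · exact (hw z hz).2.2
    · exact absurd (Finset.mem_of_mem_erase hu) huT

end DegreeFour

theorem stmt6_general {V : Type u} [Fintype V] [DecidableEq V] (G : SimpleGraph V)
    [DecidableRel G.Adj] (hdeg : ∀ v, G.degree v ≤ 4)
    (T : Finset V) (hT : IsInnerTriangle G T) :
    IsNecktie G (QT G T) ∧ T ∈ QT G T ∧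
      ∃ q1 q2 q3 : Finset V,
        q1 ≠ q2 ∧ q1 ≠ q3 ∧ q2 ≠ q3 ∧ T ≠ q1 ∧ T ≠ q2 ∧ T ≠ q3 ∧
        QT G T = {T, q1, q2, q3} ∧
        IsTriangle G q1 ∧ IsTriangle G q2 ∧ IsTriangle G q3 ∧
        (∀ x ∈ T, ∀ y ∈ T, x ≠ y →
          ∃ q ∈ ({q1, q2, q3} : Set (Finset V)), q ∩ T = ({x, y} : Finset V)) := by
  obtain ⟨hTmax, hcard, -⟩ := id hT
  choose! w hw using fun z (hz : z ∈ T) => hT.exists_isApex hz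
  have hdegT : ∀ x ∈ T, G.degree x ≤ 4 := fun x _ => hdeg x
  have hQT (q : Finset V) := mem_QT_iff_of_isApex (q := q) hTmax hcard hw hdegT
  obtain ⟨a, b, c, hab, hac, hbc, hT_eq⟩ := Finset.card_eq_three.1 hcard
  have ha : a ∈ T := by simp [hT_eq]
  have hb : b ∈ T := by simp [hT_eq]
  have hc : c ∈ T := by simp [hT_eq]
  have hTne (z : V) (hz : z ∈ T) : T ≠ insert (w z) (T.erase z) :=
    fun h => (hw z hz).notMem_insert_erase hz (h ▸ hz)
  refine ⟨isNecktie_QT_of_isApex hTmax hcard hw hdegT, (hQT T).2 (Or.inl rfl), _, _, _,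
    (hw a ha).insert_erase_ne (hw b hb) hb hab, (hw a ha).insert_erase_ne (hw c hc) hc hac,
    (hw b hb).insert_erase_ne (hw c hc) hc hbc, hTne a ha, hTne b hb, hTne c hc, ?_,
    (hw a ha).isTriangle hTmax.1 hcard ha, (hw b hb).isTriangle hTmax.1 hcard hb,
    (hw c hc).isTriangle hTmax.1 hcard hc, fun x hx y hy hxy => ?_⟩
  · ext q
    rw [hQT, hT_eq]
    simp
  · obtain ⟨z, hz, hz_eq⟩ := Finset.exists_erase_eq_pair hcard hx hy hxy
    refine ⟨_, ?_, (hw z hz).insert_erase_inter.trans hz_eq⟩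
    rw [hT_eq, Finset.mem_insert, Finset.mem_insert, Finset.mem_singleton] at hz
    rcases hz with rfl | rfl | rfl <;> simp

theorem stmt6 {V : Type u} [Fintype V] [DecidableEq V] (G : SimpleGraph V)
    [DecidableRel G.Adj] (hconn : G.Connected) (hdeg : ∀ v, G.degree v ≤ 4)
    (hoct : ¬ Nonempty (G ≃g octahedron))
    (T : Finset V) (hT : IsInnerTriangle G T) :
    IsNecktie G (QT G T) ∧ T ∈ QT G T ∧
      ∃ q1 q2 q3 : Finset V,
        q1 ≠ q2 ∧ q1 ≠ q3 ∧ q2 ≠ q3 ∧ T ≠ q1 ∧ T ≠ q2 ∧ T ≠ q3 ∧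
        QT G T = {T, q1, q2, q3} ∧
        IsTriangle G q1 ∧ IsTriangle G q2 ∧ IsTriangle G q3 ∧
        (∀ x ∈ T, ∀ y ∈ T, x ≠ y →
          ∃ q ∈ ({q1, q2, q3} : Set (Finset V)), q ∩ T = ({x, y} : Finset V)) :=
  stmt6_general G hdeg T hT
end

section
/- Let G be a connected graph with maximum degree at most 4, not the octahedron. If T and T' are triangles of G with T ∩ T' = {x} and T is an inner triangle, then the neighborhood N(x) induces a 4-cycle in G. -/
universe u

variable {V : Type u}

/-!
Write `T = {x, a, b}`. Since `T` and `T'` are cliques meeting only in `x` and `deg x ≤ 4`,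
the neighbourhood of `x` is exactly `{a, b} ∪ (T' \ {x})`. Innerness of `T` puts the edges
`xa` and `xb` in further triangles, whose third vertices must then lie in `T' \ {x}`: so
`a ∼ u` and `b ∼ v` for some `u, v ∈ T'`. Maximality of the clique `T` forbids a vertex
outside `T` adjacent to all of `x, a, b`, which forces `u ≠ v`, `a ≁ v` and `b ≁ u`. Hence
`N(x)` is the induced cycle `a b v u`.
-/

namespace Finset

variable {α : Type*} [DecidableEq α] {s : Finset α} {x y : α}

lemma exists_eq_insert_pair_of_card_eq_three (hs : s.card = 3) (hx : x ∈ s) :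
    ∃ y z, x ≠ y ∧ x ≠ z ∧ y ≠ z ∧ s = {x, y, z} := by
  have hcard : (s.erase x).card = 2 := by rw [card_erase_of_mem hx, hs]
  obtain ⟨y, z, hyz, hsx⟩ := card_eq_two.mp hcard
  have hy : y ∈ s.erase x := by simp [hsx]
  have hz : z ∈ s.erase x := by simp [hsx]
  exact ⟨y, z, (ne_of_mem_erase hy).symm, (ne_of_mem_erase hz).symm, hyz,
    by rw [← insert_erase hx, hsx]⟩

lemma exists_eq_insert_insert_singleton_of_card_eq_three (hs : s.card = 3) (hx : x ∈ s)
    (hy : y ∈ s) (hxy : x ≠ y) : ∃ z, x ≠ z ∧ y ≠ z ∧ s = {x, y, z} := by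
  obtain ⟨y', z, hxy', hxz, hyz, rfl⟩ := exists_eq_insert_pair_of_card_eq_three hs hx
  simp only [mem_insert, mem_singleton] at hy
  rcases hy with rfl | rfl | rfl
  · exact absurd rfl hxy
  · exact ⟨z, hxz, hyz, rfl⟩
  · exact ⟨y', hxy', hyz.symm, by rw [pair_comm]⟩

end Finset

section

variable {G : SimpleGraph V}

lemma MaxClique.not_forall_adj {s : Finset V} (hs : MaxClique G s) (w : V) :
    ¬ ∀ y ∈ s, G.Adj y w := by
  classical
  intro hw
  have hclique : G.IsClique ((insert w s : Finset V) : Set V) := by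
    rw [Finset.coe_insert]
    exact hs.1.insert fun y hy _ => (hw y hy).symm
  have hws : w ∈ s := by
    rw [hs.2 _ hclique (Finset.subset_insert w s)]
    exact Finset.mem_insert_self w s
  exact (hw w hws).ne rfl

lemma IsInnerTriangle.exists_notMem_adj_adj [DecidableEq V] {T : Finset V}
    (hT : IsInnerTriangle G T) {p q : V} (hp : p ∈ T) (hq : q ∈ T) (hpq : p ≠ q) :
    ∃ w ∉ T, G.Adj p w ∧ G.Adj q w := by
  obtain ⟨T₂, hT₂, -, hTT₂⟩ := hT.2.2 p hp q hq hpq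
  have hpqT₂ : ({p, q} : Finset V) ⊆ T₂ := hTT₂ ▸ Finset.inter_subset_right
  obtain ⟨w, hpw, hqw, rfl⟩ := Finset.exists_eq_insert_insert_singleton_of_card_eq_three hT₂.2
    (hpqT₂ (by simp)) (hpqT₂ (by simp)) hpq
  refine ⟨w, fun hwT => ?_, hT₂.1 (by simp) (by simp) hpw, hT₂.1 (by simp) (by simp) hqw⟩
  have hw : w ∈ T ∩ {p, q, w} := Finset.mem_inter.mpr ⟨hwT, by simp⟩
  rw [hTT₂, Finset.mem_insert, Finset.mem_singleton] at hw
  exact hw.elim hpw.symm hqw.symm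

lemma SimpleGraph.neighborFinset_eq_erase_union [Fintype V] [DecidableEq V]
    [DecidableRel G.Adj] {s t : Finset V} {x : V} (hs : G.IsClique (s : Set V))
    (ht : G.IsClique (t : Set V))
    (hst : s ∩ t = {x}) (hdeg : G.degree x ≤ s.card + t.card - 2) :
    G.neighborFinset x = (s ∪ t).erase x := by
  obtain ⟨hxs, hxt⟩ := Finset.mem_inter.mp (by simp [hst] : x ∈ s ∩ t)
  have hsub : (s ∪ t).erase x ⊆ G.neighborFinset x := by
    intro y hy
    obtain ⟨hyx, hy⟩ := Finset.mem_erase.mp hy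
    rw [mem_neighborFinset]
    rcases Finset.mem_union.mp hy with hy | hy
    · exact hs hxs hy hyx.symm
    · exact ht hxt hy hyx.symm
  refine (Finset.eq_of_subset_of_card_le hsub ?_).symm
  have hcard := Finset.card_union_add_card_inter s t
  rw [hst, Finset.card_singleton] at hcard
  rw [card_neighborFinset_eq_degree, Finset.card_erase_of_mem (Finset.mem_union_left t hxs)]
  omega

lemma inducesC4_of_adj [DecidableEq V] {s : Finset V} {a b c d : V}
    (hab : G.Adj a b) (hbc : G.Adj b c) (hcd : G.Adj c d) (hda : G.Adj d a)
    (hac : ¬ G.Adj a c) (hbd : ¬ G.Adj b d) (hac' : a ≠ c) (hbd' : b ≠ d)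
    (hs : s = {a, b, c, d}) : InducesC4 G s :=
  ⟨a, b, c, d, hab.ne, hac', hda.ne.symm, hbc.ne, hbd', hcd.ne, hs,
    hab, hbc, hcd, hda, hac, hbd⟩

end

theorem stmt8_general {V : Type u} [Fintype V] [DecidableEq V] (G : SimpleGraph V)
    [DecidableRel G.Adj] (hdeg : ∀ v, G.degree v ≤ 4)
    (T T' : Finset V) (x : V)
    (hT : IsInnerTriangle G T) (hT' : IsTriangle G T')
    (hx : T ∩ T' = ({x} : Finset V)) :
    InducesC4 G (G.neighborFinset x) := by
  obtain ⟨hxT, hxT'⟩ := Finset.mem_inter.mp (by simp [hx] : x ∈ T ∩ T')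
  obtain ⟨a, b, hxa, hxb, hab, rfl⟩ :=
    Finset.exists_eq_insert_pair_of_card_eq_three hT.2.1 hxT
  have hN := G.neighborFinset_eq_erase_union hT.1.1 hT'.1 hx
    (by rw [hT.2.1, hT'.2]; exact hdeg x)
  have hT'_of_adj : ∀ w ∉ ({x, a, b} : Finset V), G.Adj x w → w ∈ T' := fun w hwT hxw => by
    simp only [Finset.mem_insert, Finset.mem_singleton, not_or] at hwT
    simpa [hN, hwT] using (G.mem_neighborFinset x w).mpr hxw
  have hno_apex : ∀ w, G.Adj x w → G.Adj a w → G.Adj b w → False := fun w hxw haw hbw =>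
    hT.1.not_forall_adj w (by simp [hxw, haw, hbw])
  obtain ⟨u, huT, hxu, hau⟩ := hT.exists_notMem_adj_adj (by simp) (by simp) hxa
  obtain ⟨v, hxv, huv, rfl⟩ := Finset.exists_eq_insert_insert_singleton_of_card_eq_three hT'.2
    hxT' (hT'_of_adj u huT hxu) hxu.ne
  obtain ⟨w, hwT, hxw, hbw⟩ := hT.exists_notMem_adj_adj (by simp) (by simp) hxb
  have hbv : G.Adj b v := by
    rcases (by simpa using hT'_of_adj w hwT hxw : w = x ∨ w = u ∨ w = v) with rfl | rfl | rfl
    · exact absurd hxw G.irrefl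
    · exact absurd hbw (hno_apex w hxw hau)
    · exact hbw
  have hvT : v ∉ ({x, a, b} : Finset V) := fun hvT =>
    hxv (Finset.mem_singleton.mp (hx ▸ Finset.mem_inter.mpr ⟨hvT, by simp⟩)).symm
  simp only [Finset.mem_insert, Finset.mem_singleton, not_or] at huT hvT
  refine inducesC4_of_adj (hT.1.1 (by simp) (by simp) hab) hbv
    (hT'.1 (by simp) (by simp) huv.symm) hau.symm
    (fun hav => hno_apex v (hT'.1 (by simp) (by simp) hxv) hav hbv)
    (fun hbu => hno_apex u hxu hau hbu) (Ne.symm hvT.2.1) (Ne.symm huT.2.2) ?_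
  ext y
  simp only [hN, Finset.mem_erase, Finset.mem_union, Finset.mem_insert, Finset.mem_singleton]
  grind

theorem stmt8 {V : Type u} [Fintype V] [DecidableEq V] (G : SimpleGraph V)
    [DecidableRel G.Adj] (hconn : G.Connected) (hdeg : ∀ v, G.degree v ≤ 4)
    (hoct : ¬ Nonempty (G ≃g octahedron))
    (T T' : Finset V) (x : V)
    (hT : IsInnerTriangle G T) (hT' : IsTriangle G T')
    (hx : T ∩ T' = ({x} : Finset V)) :
    InducesC4 G (G.neighborFinset x) :=
  stmt8_general G hdeg T T' x hT hT' hx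
end

section
/- Let G be a connected graph with maximum degree at most 4, not the octahedron. If T and T' are inner triangles of G with |T ∩ T'| = 1, then none of the three ears of the necktie Q_T (i.e., the members of Q_T other than T) is an inner triangle, and the only normal vertex of T is the vertex in T ∩ T'. -/
universe u

variable {V : Type u}

/-! Write `T = xab` and `T' = xcd`. Since `deg x ≤ 4`, the neighbours of `x` are `a, b, c, d`, so
the second triangles on `xa` and `xb` use distinct vertices of `T'`: after relabelling, `ac` and
`bd` are edges, while maximality of `T` rules out `ad` and `bc`. Let `e` and `f` be the apexes of
second triangles on `ab` and `cd`. If `e = f`, the six vertices induce an octahedron, which, being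
4-regular, is all of the connected graph `G`. So `e ≠ f`, and degree counting gives
`N(a) = {x, b, c, e}` and `N(c) = {x, a, d, f}`; in particular `ce` is not an edge. Hence the
cliques through `a` are `xab`, `xac`, `abe`; the edges `ac` and `ae` lie in no second triangle, so
these ears are not inner, and the clique `xbd` meets every clique through `a`, so `a` is not
normal. Finally a clique meeting `xab`, `xac`, `xbd`, `xcd` but avoiding `x` would contain a
non-edge of the induced 4-cycle `acdb`, so `x` is normal. The roles of `a` and `b` are symmetric. -/

section

variable {G : SimpleGraph V}

theorem maxClique_triple_iff [DecidableEq V] {u v w : V} :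
    MaxClique G {u, v, w} ↔
      G.IsClique (({u, v, w} : Finset V) : Set V) ∧
        ∀ z, G.Adj u z → G.Adj v z → G.Adj w z → False := by
  refine ⟨fun h => ⟨h.1, fun z hu hv hw => ?_⟩, fun ⟨hcl, h⟩ => ⟨hcl, fun t ht hsub => ?_⟩⟩
  · have hz : G.IsClique ((insert z {u, v, w} : Finset V) : Set V) := by
      rw [Finset.coe_insert, SimpleGraph.isClique_insert]
      refine ⟨h.1, fun t ht _ => ?_⟩
      simp only [Finset.coe_insert, Finset.coe_singleton, Set.mem_insert_iff,
        Set.mem_singleton_iff] at ht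
      rcases ht with rfl | rfl | rfl
      exacts [hu.symm, hv.symm, hw.symm]
    have hzmem : z ∈ ({u, v, w} : Finset V) :=
      (h.2 _ hz (Finset.subset_insert _ _)) ▸ Finset.mem_insert_self _ _
    simp only [Finset.mem_insert, Finset.mem_singleton] at hzmem
    rcases hzmem with rfl | rfl | rfl <;> exact G.loopless.irrefl _ ‹_›
  · refine hsub.antisymm fun z hz => ?_
    by_contra hzn
    have adj : ∀ y ∈ ({u, v, w} : Finset V), G.Adj y z := fun y hy =>
      ht (hsub hy) hz (by rintro rfl; exact hzn hy)
    exact h z (adj u (by simp)) (adj v (by simp)) (adj w (by simp))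

theorem adj_cases_of_degree_le_four [Fintype V] [DecidableRel G.Adj] {v a b c d : V}
    (hdeg : G.degree v ≤ 4)
    (hab : a ≠ b) (hac : a ≠ c) (had : a ≠ d) (hbc : b ≠ c) (hbd : b ≠ d) (hcd : c ≠ d)
    (ha : G.Adj v a) (hb : G.Adj v b) (hc : G.Adj v c) (hd : G.Adj v d) {z : V}
    (hz : G.Adj v z) : z = a ∨ z = b ∨ z = c ∨ z = d := by
  classical
  have hsub : {a, b, c, d} ⊆ G.neighborFinset v := by
    intro t ht
    simp only [Finset.mem_insert, Finset.mem_singleton] at ht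
    rcases ht with rfl | rfl | rfl | rfl <;> simpa
  have hcard : G.degree v ≤ ({a, b, c, d} : Finset V).card := by
    rw [Finset.card_insert_of_notMem (by simp [hab, hac, had]),
      Finset.card_insert_of_notMem (by simp [hbc, hbd]), Finset.card_pair hcd]
    exact hdeg
  have := Finset.eq_of_subset_of_card_le hsub hcard ▸ (G.mem_neighborFinset v z).2 hz
  simpa using this

theorem IsInnerTriangle.exists_adj_adj_notMem [DecidableEq V] {T : Finset V}
    (hT : IsInnerTriangle G T) {u v : V} (hu : u ∈ T) (hv : v ∈ T) (huv : u ≠ v) :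
    ∃ w ∉ T, G.Adj u w ∧ G.Adj v w := by
  obtain ⟨T', ⟨hcl, hcard⟩, -, hint⟩ := hT.2.2 u hu v hv huv
  have huvT' : {u, v} ⊆ T' := hint ▸ Finset.inter_subset_right
  obtain ⟨w, hwT', hw⟩ : ∃ w ∈ T', w ∉ ({u, v} : Finset V) :=
    Finset.exists_of_ssubset
      (huvT'.ssubset_of_ne (by rintro rfl; simp [Finset.card_pair huv] at hcard))
  have hwT : w ∉ T := fun hwT => hw (hint ▸ Finset.mem_inter.2 ⟨hwT, hwT'⟩)
  simp only [Finset.mem_insert, Finset.mem_singleton, not_or] at hw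
  exact ⟨w, hwT, hcl (huvT' (by simp)) hwT' (Ne.symm hw.1),
    hcl (huvT' (by simp)) hwT' (Ne.symm hw.2)⟩

theorem exists_eq_triple_of_card_eq_three [DecidableEq V] {T : Finset V} (hT : T.card = 3)
    {x : V} (hx : x ∈ T) : ∃ a b, T = {x, a, b} := by
  obtain ⟨a, b, -, hab⟩ := Finset.card_eq_two.1 (by rw [Finset.card_erase_of_mem hx, hT])
  exact ⟨a, b, by rw [← hab, Finset.insert_erase hx]⟩

theorem MaxClique.nonempty [Nonempty V] {q : Finset V} (hq : MaxClique G q) : q.Nonempty := by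
  classical
  obtain ⟨v⟩ := ‹Nonempty V›
  rw [Finset.nonempty_iff_ne_empty]
  rintro rfl
  simpa using hq.2 {v} (by simp) (Finset.empty_subset _)

theorem isNormal_iff {x : V} :
    IsNormal G x ↔
      ∀ r, MaxClique G r → (∀ q ∈ starOf G x, ∃ v, v ∈ q ∧ v ∈ r) → x ∈ r := by
  have : Nonempty V := ⟨x⟩
  refine ⟨fun h r hr hmeet => ?_, fun h => ⟨fun q hq => hq.1, fun q hq r hr => ⟨x, hq.2, hr.2⟩,
    fun Q hQ hmax hpair => ?_⟩⟩
  · have hstar := h.2.2 (insert r (starOf G x)) (Set.subset_insert _ _)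
      (by rintro q (rfl | hq); exacts [hr, hq.1])
      (by
        rintro q (rfl | hq) q' (rfl | hq')
        · exact hr.nonempty.imp fun v hv => ⟨hv, hv⟩
        · exact (hmeet q' hq').imp fun v hv => ⟨hv.2, hv.1⟩
        · exact hmeet q hq
        · exact ⟨x, hq.2, hq'.2⟩)
    exact (hstar ▸ Set.mem_insert r _ : r ∈ starOf G x).2
  · exact Set.Subset.antisymm
      (fun r hr => ⟨hmax r hr, h r (hmax r hr) fun q hq => hpair q (hQ hq) r hr⟩) hQ

theorem SimpleGraph.Embedding.surjective_of_isRegularOfDegree [Fintype V] [DecidableRel G.Adj]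
    {W : Type*} [Fintype W] [Nonempty W] {H : SimpleGraph W} [DecidableRel H.Adj] {k : ℕ}
    (hH : H.IsRegularOfDegree k) (hG : G.Connected) (hdeg : ∀ v, G.degree v ≤ k)
    (φ : H ↪g G) : Function.Surjective φ := by
  classical
  have hclosed : ∀ p z, G.Adj (φ p) z → z ∈ Set.range φ := by
    intro p z hz
    have hsub : (H.neighborFinset p).map φ.toEmbedding ⊆ G.neighborFinset (φ p) := by
      intro t ht
      obtain ⟨s, hs, rfl⟩ := Finset.mem_map.1 ht
      simpa using (H.mem_neighborFinset p s).1 hs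
    have hcard : G.degree (φ p) ≤ ((H.neighborFinset p).map φ.toEmbedding).card := by
      rw [Finset.card_map, H.card_neighborFinset_eq_degree, hH p]
      exact hdeg _
    have hz' := (G.mem_neighborFinset _ _).2 hz
    rw [← Finset.eq_of_subset_of_card_le hsub hcard] at hz'
    obtain ⟨s, -, rfl⟩ := Finset.mem_map.1 hz'
    exact ⟨s, rfl⟩
  obtain ⟨p⟩ := ‹Nonempty W›
  intro v
  obtain ⟨w⟩ := hG.preconnected (φ p) v
  suffices ∀ u v (w : G.Walk u v), u ∈ Set.range φ → v ∈ Set.range φ from this _ _ w ⟨p, rfl⟩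
  intro u v w
  induction w with
  | nil => exact id
  | cons h _ ih =>
    rintro ⟨q, rfl⟩
    exact ih (hclosed q _ h)

end

instance : DecidableRel octahedron.Adj := fun a b => inferInstanceAs (Decidable (a.1 ≠ b.1))

theorem octahedron_isRegularOfDegree : octahedron.IsRegularOfDegree 4 := by
  show ∀ v, octahedron.degree v = 4
  decide

structure Bowtie (G : SimpleGraph V) (x a b c d e f : V) : Prop where
  adj_xa : G.Adj x a
  adj_xb : G.Adj x b
  adj_xc : G.Adj x c
  adj_xd : G.Adj x d
  adj_ab : G.Adj a b
  adj_cd : G.Adj c d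
  adj_ac : G.Adj a c
  adj_bd : G.Adj b d
  adj_ae : G.Adj a e
  adj_be : G.Adj b e
  adj_cf : G.Adj c f
  adj_df : G.Adj d f
  compl_ad : Gᶜ.Adj a d
  compl_bc : Gᶜ.Adj b c
  compl_xe : Gᶜ.Adj x e
  compl_xf : Gᶜ.Adj x f

namespace Bowtie

variable {G : SimpleGraph V} {x a b c d e f : V}

theorem swap (h : Bowtie G x a b c d e f) : Bowtie G x b a d c e f :=
  ⟨h.adj_xb, h.adj_xa, h.adj_xd, h.adj_xc, h.adj_ab.symm, h.adj_cd.symm, h.adj_bd, h.adj_ac,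
    h.adj_be, h.adj_ae, h.adj_df, h.adj_cf, h.compl_bc, h.compl_ad, h.compl_xe, h.compl_xf⟩

theorem flip (h : Bowtie G x a b c d e f) : Bowtie G x c d a b f e :=
  ⟨h.adj_xc, h.adj_xd, h.adj_xa, h.adj_xb, h.adj_cd, h.adj_ab, h.adj_ac.symm, h.adj_bd.symm,
    h.adj_cf, h.adj_df, h.adj_ae, h.adj_be, h.compl_bc.symm, h.compl_ad.symm, h.compl_xf,
    h.compl_xe⟩

variable [Fintype V] [DecidableRel G.Adj]

theorem nonempty_iso_octahedron (h : Bowtie G x a b c d e e)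
    (hconn : G.Connected) (hdeg : ∀ v, G.degree v ≤ 4) : Nonempty (G ≃g octahedron) := by
  let φ : Fin 3 × Fin 2 → V := fun p => ![![x, e], ![a, d], ![b, c]] p.1 p.2
  have hadj : ∀ p q, G.Adj (φ p) (φ q) ↔ octahedron.Adj p q := by
    have := h.compl_ad.2; have := h.compl_bc.2; have := h.compl_xe.2
    rintro ⟨i, j⟩ ⟨k, l⟩
    fin_cases i <;> fin_cases j <;> fin_cases k <;> fin_cases l <;>
      simp [φ, octahedron, h.adj_xa, h.adj_xb, h.adj_xc, h.adj_xd, h.adj_ab, h.adj_cd, h.adj_ac,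
        h.adj_bd, h.adj_ae, h.adj_be, h.adj_cf, h.adj_df, G.adj_comm, *]
  have hinj : Function.Injective φ := by
    rintro ⟨i, j⟩ ⟨k, l⟩ hpq
    by_cases hik : i = k
    · subst hik
      have := h.compl_ad.1; have := h.compl_bc.1; have := h.compl_xe.1
      fin_cases i <;> fin_cases j <;> fin_cases l <;> simp_all [φ, eq_comm]
    · have hφ := (hadj (i, j) (k, l)).2 hik
      rw [hpq] at hφ
      exact absurd hφ (G.loopless.irrefl _)
  let ψ : octahedron ↪g G := ⟨⟨φ, hinj⟩, hadj _ _⟩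
  exact ⟨(RelIso.ofSurjective ψ (ψ.surjective_of_isRegularOfDegree
    octahedron_isRegularOfDegree hconn hdeg)).symm⟩

theorem adj_x_cases (h : Bowtie G x a b c d e f) (hdeg : ∀ v, G.degree v ≤ 4) {z : V}
    (hz : G.Adj x z) : z = a ∨ z = b ∨ z = c ∨ z = d :=
  adj_cases_of_degree_le_four (hdeg x) h.adj_ab.ne h.adj_ac.ne h.compl_ad.ne h.compl_bc.ne
    h.adj_bd.ne h.adj_cd.ne h.adj_xa h.adj_xb h.adj_xc h.adj_xd hz

theorem adj_a_cases (h : Bowtie G x a b c d e f) (hdeg : ∀ v, G.degree v ≤ 4) {z : V}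
    (hz : G.Adj a z) : z = x ∨ z = b ∨ z = c ∨ z = e :=
  adj_cases_of_degree_le_four (hdeg a) h.adj_xb.ne h.adj_xc.ne h.compl_xe.ne h.compl_bc.ne
    h.adj_be.ne (fun hce => h.compl_bc.2 (hce ▸ h.adj_be)) h.adj_xa.symm h.adj_ab h.adj_ac
    h.adj_ae hz

theorem not_adj_ce (h : Bowtie G x a b c d e f) (hdeg : ∀ v, G.degree v ≤ 4) (hef : e ≠ f) :
    ¬ G.Adj c e := fun hce => by
  rcases h.flip.adj_a_cases hdeg hce with rfl | rfl | rfl | rfl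
  · exact h.compl_xe.ne rfl
  · exact h.compl_ad.2 h.adj_ae
  · exact h.adj_ae.ne rfl
  · exact hef rfl

variable [DecidableEq V]

theorem maxClique_xac (h : Bowtie G x a b c d e f) (hdeg : ∀ v, G.degree v ≤ 4) :
    MaxClique G {x, a, c} :=
  maxClique_triple_iff.2 ⟨(SimpleGraph.is3Clique_triple_iff.2 ⟨h.adj_xa, h.adj_xc, h.adj_ac⟩).1,
    fun z hxz haz hcz => by
      rcases h.adj_x_cases hdeg hxz with rfl | rfl | rfl | rfl
      · exact haz.ne rfl
      · exact h.compl_bc.2 hcz.symm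
      · exact hcz.ne rfl
      · exact h.compl_ad.2 haz⟩

theorem eq_of_maxClique_of_mem (h : Bowtie G x a b c d e f) (hdeg : ∀ v, G.degree v ≤ 4)
    (hef : e ≠ f) {q : Finset V} (hq : MaxClique G q) (ha : a ∈ q) :
    q = {x, a, b} ∨ q = {x, a, c} ∨ q = {a, b, e} := by
  have hce := h.not_adj_ce hdeg hef
  have hce' : c ≠ e := fun hc => h.compl_bc.2 (hc ▸ h.adj_be)
  have hmem : ∀ z ∈ q, z = a ∨ z = x ∨ z = b ∨ z = c ∨ z = e := fun z hz => by
    by_cases hza : z = a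
    · exact .inl hza
    · exact .inr (h.adj_a_cases hdeg (hq.1 ha hz (Ne.symm hza)))
  have hadj : ∀ u ∈ q, ∀ v ∈ q, u ≠ v → G.Adj u v := fun u hu v hv => hq.1 hu hv
  have eq_triple {u v w : V} (huv : G.Adj u v) (huw : G.Adj u w) (hvw : G.Adj v w)
      (hsub : q ⊆ {u, v, w}) : q = {u, v, w} :=
    hq.2 _ (SimpleGraph.is3Clique_triple_iff.2 ⟨huv, huw, hvw⟩).1 hsub
  by_cases hx : x ∈ q
  · by_cases hb : b ∈ q
    · refine .inl (eq_triple h.adj_xa h.adj_xb h.adj_ab fun z hz => ?_)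
      rcases hmem z hz with rfl | rfl | rfl | rfl | rfl
      · simp
      · simp
      · simp
      · exact absurd (hadj _ hb _ hz h.compl_bc.ne) h.compl_bc.2
      · exact absurd (hadj _ hx _ hz h.compl_xe.ne) h.compl_xe.2
    · refine .inr (.inl (eq_triple h.adj_xa h.adj_xc h.adj_ac fun z hz => ?_))
      rcases hmem z hz with rfl | rfl | rfl | rfl | rfl
      · simp
      · simp
      · exact absurd hz hb
      · simp
      · exact absurd (hadj _ hx _ hz h.compl_xe.ne) h.compl_xe.2
  · refine .inr (.inr (eq_triple h.adj_ab h.adj_ae h.adj_be fun z hz => ?_))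
    rcases hmem z hz with rfl | rfl | rfl | hzc | rfl
    · simp
    · exact absurd hz hx
    · simp
    · subst hzc
      have hxac := eq_triple h.adj_xa h.adj_xc h.adj_ac fun z hz' => by
        rcases hmem z hz' with rfl | rfl | rfl | rfl | rfl
        · simp
        · simp
        · exact absurd (hadj _ hz' _ hz h.compl_bc.ne) h.compl_bc.2
        · simp
        · exact absurd (hadj _ hz _ hz' hce') hce
      exact absurd (hxac ▸ Finset.mem_insert_self x _) hx
    · simp

theorem not_isInnerTriangle (h : Bowtie G x a b c d e f) (hdeg : ∀ v, G.degree v ≤ 4)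
    (hef : e ≠ f) {q : Finset V} (hq : MaxClique G q) (ha : a ∈ q) (hqT : q ≠ {x, a, b}) :
    ¬ IsInnerTriangle G q := by
  intro hinner
  have hce := h.not_adj_ce hdeg hef
  rcases h.eq_of_maxClique_of_mem hdeg hef hq ha with rfl | rfl | rfl
  · exact hqT rfl
  · obtain ⟨w, hw, haw, hcw⟩ := hinner.exists_adj_adj_notMem (by simp) (by simp) h.adj_ac.ne
    rcases h.adj_a_cases hdeg haw with rfl | rfl | rfl | rfl
    · simp at hw
    · exact h.compl_bc.2 hcw.symm
    · exact hcw.ne rfl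
    · exact hce hcw
  · obtain ⟨w, hw, haw, hew⟩ := hinner.exists_adj_adj_notMem (by simp) (by simp) h.adj_ae.ne
    rcases h.adj_a_cases hdeg haw with rfl | rfl | rfl | rfl
    · exact h.compl_xe.2 hew.symm
    · simp at hw
    · exact hce hew.symm
    · exact hew.ne rfl

theorem not_isNormal_a (h : Bowtie G x a b c d e f) (hdeg : ∀ v, G.degree v ≤ 4)
    (hef : e ≠ f) : ¬ IsNormal G a := by
  rw [isNormal_iff]
  intro hnormal
  have haxbd := hnormal _ (h.swap.maxClique_xac hdeg) fun q hq => by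
    rcases h.eq_of_maxClique_of_mem hdeg hef hq.1 hq.2 with rfl | rfl | rfl
    · exact ⟨x, by simp, by simp⟩
    · exact ⟨x, by simp, by simp⟩
    · exact ⟨b, by simp, by simp⟩
  simp only [Finset.mem_insert, Finset.mem_singleton] at haxbd
  rcases haxbd with rfl | rfl | rfl
  exacts [h.adj_xa.ne rfl, h.adj_ab.ne rfl, h.compl_ad.ne rfl]

theorem isNormal_x (h : Bowtie G x a b c d e f) (hdeg : ∀ v, G.degree v ≤ 4)
    (hT : MaxClique G {x, a, b}) (hT' : MaxClique G {x, c, d}) : IsNormal G x := by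
  rw [isNormal_iff]
  intro r hr hmeet
  by_contra hxr
  have meet : ∀ {u v : V}, MaxClique G {x, u, v} → u ∈ r ∨ v ∈ r := fun hq => by
    obtain ⟨w, hw, hwr⟩ := hmeet _ ⟨hq, by simp⟩
    simp only [Finset.mem_insert, Finset.mem_singleton] at hw
    rcases hw with rfl | rfl | rfl
    exacts [absurd hwr hxr, .inl hwr, .inr hwr]
  have nonadj : ∀ {u v : V}, Gᶜ.Adj u v → u ∈ r → v ∉ r := fun huv hu hv =>
    huv.2 (hr.1 hu hv huv.1)
  rcases meet hT' with hc | hd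
  · have ha := (meet hT).resolve_right fun hb => nonadj h.compl_bc hb hc
    exact (meet (h.swap.maxClique_xac hdeg)).elim (fun hb => nonadj h.compl_bc hb hc)
      (nonadj h.compl_ad ha)
  · have hb := (meet hT).resolve_left fun ha => nonadj h.compl_ad ha hd
    exact (meet (h.maxClique_xac hdeg)).elim (fun ha => nonadj h.compl_ad ha hd)
      (nonadj h.compl_bc hb)

end Bowtie

section

variable {G : SimpleGraph V} [DecidableEq V]

theorem mem_or_mem_of_two_le_card_inter {q : Finset V} {x a b : V}
    (h : 2 ≤ (q ∩ {x, a, b}).card) : a ∈ q ∨ b ∈ q := by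
  by_contra! hab
  have : q ∩ {x, a, b} ⊆ {x} := fun z hz => by
    simp only [Finset.mem_inter, Finset.mem_insert, Finset.mem_singleton] at hz ⊢
    rcases hz with ⟨hz, rfl | rfl | rfl⟩
    exacts [rfl, absurd hz hab.1, absurd hz hab.2]
  simpa using (Finset.card_le_card this).trans_lt' h

theorem exists_cross_edges [Fintype V] [DecidableRel G.Adj] (hdeg : ∀ v, G.degree v ≤ 4)
    {T T' : Finset V} {x : V} (hT : IsInnerTriangle G T) (hT' : IsInnerTriangle G T')
    (hx : T ∩ T' = {x}) :
    ∃ a b c d, T = {x, a, b} ∧ T' = {x, c, d} ∧ c ∉ T ∧ d ∉ T ∧ G.Adj a c ∧ G.Adj b d := by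
  have hxT : x ∈ T ∩ T' := hx ▸ Finset.mem_singleton_self x
  obtain ⟨a, b, rfl⟩ := exists_eq_triple_of_card_eq_three hT.2.1 (Finset.mem_inter.1 hxT).1
  obtain ⟨c, d, rfl⟩ := exists_eq_triple_of_card_eq_three hT'.2.1 (Finset.mem_inter.1 hxT).2
  obtain ⟨hxa, hxb, hab⟩ := SimpleGraph.is3Clique_triple_iff.1 ⟨hT.1.1, hT.2.1⟩
  obtain ⟨hxc, hxd, hcd⟩ := SimpleGraph.is3Clique_triple_iff.1 ⟨hT'.1.1, hT'.2.1⟩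
  have hcT : c ∉ ({x, a, b} : Finset V) := fun hc =>
    hxc.ne (Finset.mem_singleton.1 (hx ▸ Finset.mem_inter.2 ⟨hc, by simp⟩)).symm
  have hdT : d ∉ ({x, a, b} : Finset V) := fun hd =>
    hxd.ne (Finset.mem_singleton.1 (hx ▸ Finset.mem_inter.2 ⟨hd, by simp⟩)).symm
  simp only [Finset.mem_insert, Finset.mem_singleton, not_or] at hcT hdT
  have apex : ∀ w ∉ ({x, a, b} : Finset V), G.Adj x w → w = c ∨ w = d := fun w hw hxw => by
    rcases adj_cases_of_degree_le_four (hdeg x) hab.ne (Ne.symm hcT.2.1) (Ne.symm hdT.2.1)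
      (Ne.symm hcT.2.2) (Ne.symm hdT.2.2) hcd.ne hxa hxb hxc hxd hxw with rfl | rfl | hwc | hwd
    exacts [absurd (by simp) hw, absurd (by simp) hw, .inl hwc, .inr hwd]
  obtain ⟨w₁, hw₁, hxw₁, haw₁⟩ := hT.exists_adj_adj_notMem (by simp) (by simp) hxa.ne
  obtain ⟨w₂, hw₂, hxw₂, hbw₂⟩ := hT.exists_adj_adj_notMem (by simp) (by simp) hxb.ne
  have hw₁₂ : w₁ ≠ w₂ := by
    rintro rfl
    exact (maxClique_triple_iff.1 hT.1).2 w₁ hxw₁ haw₁ hbw₂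
  rcases apex w₁ hw₁ hxw₁ with rfl | rfl <;> rcases apex w₂ hw₂ hxw₂ with rfl | rfl
  · exact absurd rfl hw₁₂
  · exact ⟨a, b, w₁, w₂, rfl, rfl, hw₁, hw₂, haw₁, hbw₂⟩
  · exact ⟨a, b, w₁, w₂, rfl, by rw [Finset.pair_comm], hw₁, hw₂, haw₁, hbw₂⟩
  · exact absurd rfl hw₁₂

theorem exists_bowtie [Fintype V] [DecidableRel G.Adj] (hdeg : ∀ v, G.degree v ≤ 4)
    {T T' : Finset V} {x : V} (hT : IsInnerTriangle G T) (hT' : IsInnerTriangle G T')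
    (hx : T ∩ T' = {x}) :
    ∃ a b c d e f, T = {x, a, b} ∧ T' = {x, c, d} ∧ Bowtie G x a b c d e f := by
  obtain ⟨a, b, c, d, rfl, rfl, hcT, hdT, hac, hbd⟩ := exists_cross_edges hdeg hT hT' hx
  obtain ⟨hxa, hxb, hab⟩ := SimpleGraph.is3Clique_triple_iff.1 ⟨hT.1.1, hT.2.1⟩
  obtain ⟨hxc, hxd, hcd⟩ := SimpleGraph.is3Clique_triple_iff.1 ⟨hT'.1.1, hT'.2.1⟩
  have hmax := (maxClique_triple_iff.1 hT.1).2
  have hmax' := (maxClique_triple_iff.1 hT'.1).2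
  obtain ⟨e, he, hae, hbe⟩ := hT.exists_adj_adj_notMem (by simp) (by simp) hab.ne
  obtain ⟨f, hf, hcf, hdf⟩ := hT'.exists_adj_adj_notMem (by simp) (by simp) hcd.ne
  refine ⟨a, b, c, d, e, f, rfl, rfl, hxa, hxb, hxc, hxd, hab, hcd, hac, hbd, hae, hbe, hcf, hdf,
    ⟨?_, fun had => hmax d hxd had hbd⟩, ⟨?_, fun hbc => hmax c hxc hac hbc⟩,
    ⟨?_, fun hxe => hmax e hxe hae hbe⟩, ⟨?_, fun hxf => hmax' f hxf hcf hdf⟩⟩ <;>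
    rintro rfl <;> simp_all

end

theorem stmt9 {V : Type u} [Fintype V] [DecidableEq V] (G : SimpleGraph V)
    [DecidableRel G.Adj] (hconn : G.Connected) (hdeg : ∀ v, G.degree v ≤ 4)
    (hoct : ¬ Nonempty (G ≃g octahedron))
    (T T' : Finset V) (x : V)
    (hT : IsInnerTriangle G T) (hT' : IsInnerTriangle G T')
    (hx : T ∩ T' = ({x} : Finset V)) :
    (∀ q ∈ QT G T, q ≠ T → ¬ IsInnerTriangle G q) ∧
    (∀ y ∈ T, (IsNormal G y ↔ y = x)) := by
  obtain ⟨a, b, c, d, e, f, rfl, rfl, h⟩ := exists_bowtie hdeg hT hT' hx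
  have hef : e ≠ f := by
    rintro rfl
    exact hoct (h.nonempty_iso_octahedron hconn hdeg)
  refine ⟨fun q ⟨hq, hcard⟩ hqT => ?_, fun y hy => ?_⟩
  · rcases mem_or_mem_of_two_le_card_inter hcard with ha | hb
    · exact h.not_isInnerTriangle hdeg hef hq ha hqT
    · exact h.swap.not_isInnerTriangle hdeg hef hq hb (by rwa [Finset.pair_comm b a])
  · simp only [Finset.mem_insert, Finset.mem_singleton] at hy
    rcases hy with rfl | rfl | rfl
    · exact iff_of_true (h.isNormal_x hdeg hT.1 hT'.1) rfl
    · exact iff_of_false (h.not_isNormal_a hdeg hef) h.adj_xa.ne'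
    · exact iff_of_false (h.swap.not_isNormal_a hdeg hef) h.adj_xb.ne'
end

section
/- Let G be a connected graph with maximum degree at most 4, not the octahedron, let T be an inner triangle, and let x be a normal vertex with x ∉ T. Then x* is adjacent to Q_T in K²(G) if and only if x is adjacent to at least two vertices of T. -/
universe u

variable {V : Type u}

/-!
A clique of `G` through `x` meeting `T` in two vertices `u ≠ v` witnesses `x ~ u` and `x ~ v`;
conversely, if `x ~ u` and `x ~ v` for an edge `uv` of `T`, any clique containing the triangle
`{x, u, v}` lies in both `x*` and `Q_T`. The two families differ because `T` itself lies in `Q_T`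
but not in `x*`.
-/

lemma exists_maxClique_superset [Finite V] {G : SimpleGraph V} {s : Finset V}
    (hs : G.IsClique (s : Set V)) : ∃ q, MaxClique G q ∧ s ⊆ q := by
  have hfin : {t : Finset V | G.IsClique (t : Set V) ∧ s ⊆ t}.Finite := Set.toFinite _
  obtain ⟨q, ⟨hq, hsq⟩, hmax⟩ := hfin.exists_maximal ⟨s, hs, subset_rfl⟩
  exact ⟨q, ⟨hq, fun t ht hqt => le_antisymm hqt (hmax ⟨ht, hsq.trans hqt⟩ hqt)⟩, hsq⟩

lemma starOf_ne_of_mem_of_notMem {G : SimpleGraph V} {Q : Set (Finset V)} {q : Finset V}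
    {x : V} (hq : q ∈ Q) (hxq : x ∉ q) : starOf G x ≠ Q := by
  rintro rfl
  exact hxq hq.2

variable [DecidableEq V] {G : SimpleGraph V} {T : Finset V}

lemma mem_QT_self (hT : MaxClique G T) (hcard : 2 ≤ T.card) : T ∈ QT G T :=
  ⟨hT, by rwa [Finset.inter_self]⟩

lemma exists_adj_adj_of_mem_starOf_of_mem_QT {x : V} {q : Finset V} (hxT : x ∉ T)
    (hqx : q ∈ starOf G x) (hqT : q ∈ QT G T) :
    ∃ u ∈ T, ∃ v ∈ T, u ≠ v ∧ G.Adj x u ∧ G.Adj x v := by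
  obtain ⟨hq, hxq⟩ := hqx
  obtain ⟨u, hu, v, hv, huv⟩ := Finset.one_lt_card.mp hqT.2
  rw [Finset.mem_inter] at hu hv
  have adj_of_mem {w : V} (hwq : w ∈ q) (hwT : w ∈ T) : G.Adj x w :=
    hq.1 hxq hwq fun hxw => hxT (hxw ▸ hwT)
  exact ⟨u, hu.2, v, hv.2, huv, adj_of_mem hu.1 hu.2, adj_of_mem hv.1 hv.2⟩

lemma starOf_inter_QT_nonempty [Finite V] {x u v : V} (hu : u ∈ T) (hv : v ∈ T)
    (huv : u ≠ v) (hadj : G.Adj u v) (hxu : G.Adj x u) (hxv : G.Adj x v) :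
    (starOf G x ∩ QT G T).Nonempty := by
  have htri : G.IsClique (({x, u, v} : Finset V) : Set V) :=
    (SimpleGraph.is3Clique_triple_iff.mpr ⟨hxu, hxv, hadj⟩).isClique
  obtain ⟨q, hq, hsub⟩ := exists_maxClique_superset htri
  have hcard : 1 < (q ∩ T).card := Finset.one_lt_card.mpr
    ⟨u, Finset.mem_inter.mpr ⟨hsub (by simp), hu⟩,
      v, Finset.mem_inter.mpr ⟨hsub (by simp), hv⟩, huv⟩
  exact ⟨q, ⟨hq, hsub (by simp)⟩, hq, hcard⟩

theorem stmt13_general {V : Type u} [Fintype V] [DecidableEq V] (G : SimpleGraph V)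
    (T : Finset V) (hT : IsInnerTriangle G T)
    (x : V) (hxT : x ∉ T) :
    Adj2 (starOf G x) (QT G T) ↔
      ∃ u ∈ T, ∃ v ∈ T, u ≠ v ∧ G.Adj x u ∧ G.Adj x v := by
  obtain ⟨hTmax, hTcard, -⟩ := hT
  constructor
  · rintro ⟨-, q, hqx, hqT⟩
    exact exists_adj_adj_of_mem_starOf_of_mem_QT hxT hqx hqT
  · rintro ⟨u, hu, v, hv, huv, hxu, hxv⟩
    have hTQ : T ∈ QT G T := mem_QT_self hTmax (by omega)
    obtain ⟨q, hqx, hqT⟩ := starOf_inter_QT_nonempty hu hv huv (hTmax.1 hu hv huv) hxu hxv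
    exact ⟨starOf_ne_of_mem_of_notMem hTQ hxT, q, hqx, hqT⟩

theorem stmt13 {V : Type u} [Fintype V] [DecidableEq V] (G : SimpleGraph V)
    [DecidableRel G.Adj] (hconn : G.Connected) (hdeg : ∀ v, G.degree v ≤ 4)
    (hoct : ¬ Nonempty (G ≃g octahedron))
    (T : Finset V) (hT : IsInnerTriangle G T)
    (x : V) (hx : IsNormal G x) (hxT : x ∉ T) :
    Adj2 (starOf G x) (QT G T) ↔
      ∃ u ∈ T, ∃ v ∈ T, u ≠ v ∧ G.Adj x u ∧ G.Adj x v :=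
  stmt13_general G T hT x hxT
end
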